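/- The state |ψ⟩ = ∑_{\{g^r_i\}} exp(iπ ∑_{r=0}^{L-1} ∑_{1≤i<j≤q} P_{ij}(g^r_j − g^{r−1}_j) g^r_i) |{g^r_i}⟩ on the periodic chain satisfies O^r_α |ψ⟩ = |ψ⟩ for every r and α, where O^r_α are the cocycle stabilizers defined above. In particular, flipping g^r_α via X^r_α changes the coefficient by exactly the phase produced by ∏_{k<α}(Z^{r+1}_k Z^r_k)^{P_{kα}} ∏_{l>α}(Z^r_l Z^{r−1}_l)^{P_{αl}}. -/

import Mathlib

open Matrix

/-- Pauli `Z` on site `s` of the periodic chain. -/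
noncomputable def Zop (L q : ℕ) [NeZero L] (s : ZMod L × Fin q) :
    Matrix ((ZMod L × Fin q) → Fin 2) ((ZMod L × Fin q) → Fin 2) ℂ :=
  Matrix.diagonal (fun x => (-1 : ℂ) ^ ((x s : ℕ)))

/-- Pauli `X` on site `s` of the periodic chain. -/
noncomputable def Xop (L q : ℕ) [NeZero L] (s : ZMod L × Fin q) :
    Matrix ((ZMod L × Fin q) → Fin 2) ((ZMod L × Fin q) → Fin 2) ℂ :=
  fun x y => if x = Function.update y s (1 - y s) then 1 else 0

/-- The cocycle stabilizer
`O^r_α = ∏_{k<α}(Z^{r+1}_k Z^r_k)^{P_{kα}} · X^r_α · ∏_{α<l}(Z^r_l Z^{r−1}_l)^{P_{αl}}`,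
written as the (diagonal) product of its `Z` factors times its `X` factor. -/
noncomputable def Ocal (L q : ℕ) [NeZero L] (P : Fin q → Fin q → ℕ)
    (r : ZMod L) (α : Fin q) :
    Matrix ((ZMod L × Fin q) → Fin 2) ((ZMod L × Fin q) → Fin 2) ℂ :=
  Matrix.diagonal (fun x =>
      (∏ k ∈ Finset.univ.filter (fun k : Fin q => k < α),
        (-1 : ℂ) ^ (P k α * ((x (r + 1, k) : ℕ) + (x (r, k) : ℕ))))
      * ∏ l ∈ Finset.univ.filter (fun l : Fin q => α < l),
        (-1 : ℂ) ^ (P α l * ((x (r, l) : ℕ) + (x (r - 1, l) : ℕ))))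
    * Xop L q (r, α)

/-!
Write `ψ = (-1) ^ B(g, g)` with the bilinear form
`B(X, Y) = ∑_r ∑_{i<j} P_{ij} (X^r_j - X^{r-1}_j) Y^r_i`. Flipping `g^r_α` adds the indicator `e`
of the site `(r, α)`, and `B(g + e, g + e) = B(g, g) + B(e, g) + B(g, e)` because `B(e, e) = 0`
(it only pairs distinct flavours `i < j`). Up to sign, `B(e, g)` and `B(g, e)` are the exponents
of the `Z` factors of `O^r_α` below and above `α`, so modulo 2 the phase of the `Z` factors
cancels the change of the exponent caused by the `X` factor.
-/

open Finset

section CocycleForm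

variable {L : ℕ} [NeZero L] {ι R : Type*} [Fintype ι] [LinearOrder ι] [CommRing R]

def cocycleForm (P : ι → ι → ℕ) (X Y : ZMod L × ι → R) : R :=
  ∑ r, ∑ p ∈ univ.filter (fun p : ι × ι => p.1 < p.2),
    (P p.1 p.2 : R) * (X (r, p.2) - X (r - 1, p.2)) * Y (r, p.1)

variable (P : ι → ι → ℕ)

lemma cocycleForm_add_left (X X' Y : ZMod L × ι → R) :
    cocycleForm P (X + X') Y = cocycleForm P X Y + cocycleForm P X' Y := by
  simp only [cocycleForm, Pi.add_apply, ← sum_add_distrib]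
  congr! 2
  ring

lemma cocycleForm_add_right (X Y Y' : ZMod L × ι → R) :
    cocycleForm P X (Y + Y') = cocycleForm P X Y + cocycleForm P X Y' := by
  simp only [cocycleForm, Pi.add_apply, ← sum_add_distrib]
  congr! 2
  ring

lemma cocycleForm_eq_sum_shift (X Y : ZMod L × ι → R) :
    cocycleForm P X Y = ∑ r, ∑ p ∈ univ.filter (fun p : ι × ι => p.1 < p.2),
      (P p.1 p.2 : R) * X (r, p.2) * (Y (r, p.1) - Y (r + 1, p.1)) := by
  have shift := Equiv.sum_comp (Equiv.addRight (1 : ZMod L)) fun r =>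
    ∑ p ∈ univ.filter (fun p : ι × ι => p.1 < p.2), (P p.1 p.2 : R) * X (r - 1, p.2) * Y (r, p.1)
  simp only [Equiv.coe_addRight, add_sub_cancel_right] at shift
  simp only [cocycleForm, mul_sub, sub_mul, sum_sub_distrib, ← shift]

lemma intCast_cocycleForm (X Y : ZMod L × ι → ℤ) :
    ((cocycleForm P X Y : ℤ) : R) = cocycleForm P (Int.cast ∘ X) (Int.cast ∘ Y) := by
  push_cast [cocycleForm]
  rfl

lemma filter_lt_filter_snd_eq (α : ι) :
    ((univ : Finset (ι × ι)).filter (fun p => p.1 < p.2)).filter (fun p => p.2 = α) =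
      (univ.filter (· < α)).map (Function.Embedding.sectL ι α) := by
  ext ⟨i, j⟩
  simp
  grind

lemma filter_lt_filter_fst_eq (α : ι) :
    ((univ : Finset (ι × ι)).filter (fun p => p.1 < p.2)).filter (fun p => p.1 = α) =
      (univ.filter (α < ·)).map (Function.Embedding.sectR α ι) := by
  ext ⟨i, j⟩
  simp
  grind

lemma cocycleForm_single_left (r : ZMod L) (α : ι) (Y : ZMod L × ι → R) :
    cocycleForm P (Pi.single (r, α) 1) Y =
      ∑ k ∈ univ.filter (· < α), (P k α : R) * (Y (r, k) - Y (r + 1, k)) := by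
  calc _ = ∑ p ∈ (univ.filter (fun p : ι × ι => p.1 < p.2)).filter (fun p => p.2 = α),
        (P p.1 p.2 : R) * (Y (r, p.1) - Y (r + 1, p.1)) := by
        simp [cocycleForm_eq_sum_shift, Pi.single_apply, ite_and, sum_filter]
    _ = _ := by rw [filter_lt_filter_snd_eq, sum_map]; rfl

lemma cocycleForm_single_right (r : ZMod L) (α : ι) (X : ZMod L × ι → R) :
    cocycleForm P X (Pi.single (r, α) 1) =
      ∑ l ∈ univ.filter (α < ·), (P α l : R) * (X (r, l) - X (r - 1, l)) := by
  calc _ = ∑ p ∈ (univ.filter (fun p : ι × ι => p.1 < p.2)).filter (fun p => p.1 = α),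
        (P p.1 p.2 : R) * (X (r, p.2) - X (r - 1, p.2)) := by
        simp [cocycleForm, Pi.single_apply, ite_and, sum_filter]
    _ = _ := by rw [filter_lt_filter_fst_eq, sum_map]; rfl

lemma cocycleForm_single_single (r : ZMod L) (α : ι) :
    cocycleForm P (Pi.single (r, α) (1 : R)) (Pi.single (r, α) 1) = 0 := by
  refine sum_eq_zero fun r' _ => sum_eq_zero fun ⟨i, j⟩ hij => ?_
  have hji : j ≠ i := (mem_filter.1 hij).2.ne'
  by_cases h : i = α
  · subst h; simp [Pi.single_apply, hji]
  · simp [Pi.single_apply, h]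

lemma cocycleForm_add_single_self (r : ZMod L) (α : ι) (X : ZMod L × ι → R) :
    cocycleForm P (X + Pi.single (r, α) 1) (X + Pi.single (r, α) 1) =
      cocycleForm P X X
        + ∑ k ∈ univ.filter (· < α), (P k α : R) * (X (r, k) - X (r + 1, k))
        + ∑ l ∈ univ.filter (α < ·), (P α l : R) * (X (r, l) - X (r - 1, l)) := by
  rw [cocycleForm_add_left, cocycleForm_add_right, cocycleForm_add_right,
    cocycleForm_single_single, cocycleForm_single_left, cocycleForm_single_right]
  ring

end CocycleForm

lemma neg_one_zpow_eq_of_intCast_eq {K : Type*} [DivisionRing K] {a b : ℤ}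
    (h : (a : ZMod 2) = b) : (-1 : K) ^ a = (-1 : K) ^ b := by
  rw [← Int.cast_negOnePow, ← Int.cast_negOnePow, (Int.negOnePow_eq_iff a b).2]
  exact even_iff_two_dvd.2 <| (ZMod.intCast_eq_intCast_iff_dvd_sub b a 2).1 h.symm

section Flip

variable {σ : Type*} [DecidableEq σ]

lemma update_one_sub_involutive (s : σ) :
    Function.Involutive fun x : σ → Fin 2 => Function.update x s (1 - x s) := by
  intro x
  simp

lemma natCast_update_one_sub (x : σ → Fin 2) (s s' : σ) :
    ((Function.update x s (1 - x s) s' : ℕ) : ZMod 2) =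
      (x s' : ℕ) + (Pi.single s 1 : σ → ZMod 2) s' := by
  by_cases h : s' = s
  · subst h
    simp only [Function.update_self, Pi.single_eq_same]
    generalize x s' = a
    revert a
    decide
  · simp [h]

end Flip

lemma Xop_mulVec (L q : ℕ) [NeZero L] (s : ZMod L × Fin q) (ψ : (ZMod L × Fin q → Fin 2) → ℂ)
    (x : ZMod L × Fin q → Fin 2) :
    (Xop L q s).mulVec ψ x = ψ (Function.update x s (1 - x s)) := by
  have hflip (y) : x = Function.update y s (1 - y s) ↔ y = Function.update x s (1 - x s) :=
    eq_comm.trans (update_one_sub_involutive s).eq_iff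
  simp [Xop, mulVec, dotProduct, hflip]

lemma Ocal_mulVec (L q : ℕ) [NeZero L] (P : Fin q → Fin q → ℕ) (r : ZMod L) (α : Fin q)
    (ψ : (ZMod L × Fin q → Fin 2) → ℂ) (x : ZMod L × Fin q → Fin 2) :
    (Ocal L q P r α).mulVec ψ x =
      (-1 : ℂ) ^ (∑ k ∈ univ.filter (· < α), P k α * ((x (r + 1, k) : ℕ) + (x (r, k) : ℕ))
        + ∑ l ∈ univ.filter (α < ·), P α l * ((x (r, l) : ℕ) + (x (r - 1, l) : ℕ)))
      * ψ (Function.update x (r, α) (1 - x (r, α))) := by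
  rw [Ocal, ← mulVec_mulVec, mulVec_diagonal, Xop_mulVec, pow_add, prod_pow_eq_pow_sum,
    prod_pow_eq_pow_sum]

lemma exp_pi_mul_I_mul_intCast (n : ℤ) : Complex.exp (Real.pi * Complex.I * n) = (-1) ^ n := by
  rw [mul_comm, Complex.exp_int_mul, Complex.exp_pi_mul_I]

theorem cocycle_state_stabilized_general (L q : ℕ) [NeZero L]
    (P : Fin q → Fin q → ℕ)
    (ψ : ((ZMod L × Fin q) → Fin 2) → ℂ)
    (hψ : ∀ x, ψ x = Complex.exp ((Real.pi : ℂ) * Complex.I *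
      ∑ r : ZMod L,
        ∑ p ∈ Finset.univ.filter (fun p : Fin q × Fin q => p.1 < p.2),
          (P p.1 p.2 : ℂ) *
            (((x (r, p.2) : ℕ) : ℂ) - ((x (r - 1, p.2) : ℕ) : ℂ)) *
            ((x (r, p.1) : ℕ) : ℂ))) :
    ∀ (r : ZMod L) (α : Fin q), (Ocal L q P r α).mulVec ψ = ψ := by
  intro r α
  funext x
  let X (x : ZMod L × Fin q → Fin 2) (s : ZMod L × Fin q) : ℤ := (x s : ℕ)
  have hψX (x) : ψ x = (-1 : ℂ) ^ cocycleForm P (X x) (X x) := by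
    rw [hψ, ← exp_pi_mul_I_mul_intCast, intCast_cocycleForm]
    rfl
  have hflip : Int.cast ∘ X (Function.update x (r, α) (1 - x (r, α))) =
      Int.cast ∘ X x + (Pi.single (r, α) 1 : ZMod L × Fin q → ZMod 2) := by
    funext s
    simpa [X] using natCast_update_one_sub x (r, α) s
  rw [Ocal_mulVec, hψX, hψX, ← zpow_natCast, ← zpow_add₀ (by norm_num)]
  apply neg_one_zpow_eq_of_intCast_eq
  rw [Int.cast_add, intCast_cocycleForm, intCast_cocycleForm, hflip, cocycleForm_add_single_self]
  push_cast [CharTwo.sub_eq_add, X, Function.comp_apply, add_comm ((x (r + 1, _) : ℕ) : ZMod 2)]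
  -- the phase of the `Z` factors occurs twice, and `2 = 0` in `ZMod 2`
  ring_nf
  reduce_mod_char

/-- The cocycle wave function
`ψ(g) = exp(iπ ∑_r ∑_{i<j} P_{ij}(g^r_j − g^{r−1}_j) g^r_i)` is a common `+1`
eigenstate of all cocycle stabilizers `O^r_α`. -/
theorem cocycle_state_stabilized (L q : ℕ) [NeZero L]
    (P : Fin q → Fin q → ℕ) (hP : ∀ i j, P i j ≤ 1)
    (ψ : ((ZMod L × Fin q) → Fin 2) → ℂ)
    (hψ : ∀ x, ψ x = Complex.exp ((Real.pi : ℂ) * Complex.I *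
      ∑ r : ZMod L,
        ∑ p ∈ Finset.univ.filter (fun p : Fin q × Fin q => p.1 < p.2),
          (P p.1 p.2 : ℂ) *
            (((x (r, p.2) : ℕ) : ℂ) - ((x (r - 1, p.2) : ℕ) : ℂ)) *
            ((x (r, p.1) : ℕ) : ℂ))) :
    ∀ (r : ZMod L) (α : Fin q), (Ocal L q P r α).mulVec ψ = ψ :=
  cocycle_state_stabilized_general L q P ψ hψ
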